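/- The theta function of the shifted Kummer lattice is given by Θ_{K_sh}(q²,w) = 4θ₀⁴θ₁¹² + 16θ₀⁶θ₁¹⁰ + 24θ₀⁸θ₁⁸ + 16θ₀¹⁰θ₁⁶ + 4θ₀¹²θ₁⁴. -/

import Mathlib

/-- The rank-one theta function `θ₀(q²,w) = Σ_{k∈ℤ} q^{2k²} w^k`. -/
noncomputable def theta0 (q w : ℂ) : ℂ := ∑' k : ℤ, q ^ (2 * k ^ 2) * w ^ k

/-- The rank-one theta function `θ₁(q²,w) = Σ_{k∈ℤ+1/2} q^{2k²} w^k`,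
written via the square roots `p² = q`, `u² = w`. -/
noncomputable def theta1 (p u : ℂ) : ℂ :=
  ∑' k : ℤ, p ^ (4 * k ^ 2 + 4 * k + 1) * u ^ (2 * k + 1)

/-- The vector space `F₂⁴` (16 points), indexing the coordinates. -/
abbrev V4 : Type := Fin 4 → ZMod 2

/-- The Kummer lattice in exceptional-curve coordinates, in *doubled* coordinates:
`a = 2v` where `v ∈ ℝ^{F₂⁴}` has half-integer coordinates and the function
`F₂⁴ → F₂`, `x ↦ 2 v_x mod 2 = a_x mod 2`, is affine-linear. -/
def KummerD : Set (V4 → ℤ) :=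
  {a | ∃ (l : V4 →ₗ[ZMod 2] ZMod 2) (c : ZMod 2), ∀ x, ((a x : ZMod 2)) = l x + c}

/-- Doubled coordinates of the shift vector `r₀ = ½·1_{P₁}`, where
`P₁ = {(a,b,0,0)} ⊂ F₂⁴`. -/
def shiftR0 : V4 → ℤ := fun x => if x 2 = 0 ∧ x 3 = 0 then 1 else 0

/-- Doubled coordinates of the shift vector `r₁ = ½·1_{P₁ Δ P₂}`, where
`P₁ = {(a,b,0,0)}` and `P₂ = {(0,0,c,d)}` are the two coordinate 2-planes in `F₂⁴`. -/
def shiftR1 : V4 → ℤ :=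
  fun x => if ((x 2 = 0 ∧ x 3 = 0) ↔ (x 0 = 0 ∧ x 1 = 0)) then 0 else 1

/-- The shifted Kummer lattice `K_sh = (K + r₀) ∪ (K + r₁)`, in doubled coordinates. -/
def KummerShD : Set (V4 → ℤ) := {a | a - shiftR0 ∈ KummerD ∨ a - shiftR1 ∈ KummerD}

/-- The theta function `Θ_T(q²,w) = Σ_{v∈T} q^{2 Σ v_x²} w^{Σ v_x}`, for a set `T`
of half-integer vectors given in doubled coordinates `a = 2v`, so that
`2 Σ v_x² = (Σ a_x²)/2` and `Σ v_x = (Σ a_x)/2` (integers for the sets considered). -/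
noncomputable def ThetaL {ι : Type*} [Fintype ι] (T : Set (ι → ℤ)) (q w : ℂ) : ℂ :=
  ∑' v : T, q ^ ((∑ i, (v : ι → ℤ) i ^ 2) / 2) * w ^ ((∑ i, (v : ι → ℤ) i) / 2)

/-!
In doubled coordinates `a = 2v`, membership in `K_sh` depends only on the parity pattern
`a mod 2 : F₂⁴ → F₂`, and the admissible patterns are `ℓ + c + 1_{P₁}` and `ℓ + c + 1_{P₁ Δ P₂}`
with `ℓ` linear: 64 distinct patterns, each with an even number of ones. On the class of such a
pattern `ε` the weight `q^{2Σv²} w^{Σv}` factors as `∏ₓ p^{aₓ²} u^{aₓ}`, so writing `aₓ = 2mₓ + εₓ`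
turns the sum over the class into `θ₀^{#ε⁻¹(0)} θ₁^{#ε⁻¹(1)}`. There are 4, 16, 24, 16, 4 patterns
with 4, 6, 8, 10, 12 ones.
-/

open Finset Filter

theorem zpow_sum₀ {G₀ ι : Type*} [CommGroupWithZero G₀] {a : G₀} (ha : a ≠ 0)
    (s : Finset ι) (f : ι → ℤ) : a ^ (∑ i ∈ s, f i) = ∏ i ∈ s, a ^ f i := by
  induction s using Finset.cons_induction with
  | empty => simp
  | cons i s hi ih => rw [sum_cons, prod_cons, zpow_add₀ ha, ih]

section TsumPiProd

variable {κ R : Type*} [NormedCommRing R] [CompleteSpace R]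

theorem summable_norm_prod_and_tsum_prod_fin (n : ℕ) (f : Fin n → κ → R)
    (hf : ∀ i, Summable fun k => ‖f i k‖) :
    Summable (fun m : Fin n → κ => ‖∏ i, f i (m i)‖) ∧
      ∑' m : Fin n → κ, ∏ i, f i (m i) = ∏ i, ∑' k, f i k := by
  induction n with
  | zero => simp [Summable.of_finite]
  | succ n ih =>
    obtain ⟨hsum, htsum⟩ := ih (fun i => f i.succ) fun i => hf i.succ
    let E := Fin.consEquiv fun _ : Fin (n + 1) => κ
    have hE : ∀ z, ∏ i, f i (E z i) = f 0 z.1 * ∏ i, f i.succ (z.2 i) := fun z => by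
      simp [E, Fin.prod_univ_succ]
    refine ⟨?_, ?_⟩
    · rw [← E.summable_iff]
      simpa only [Function.comp_def, hE, norm_mul] using (hf 0).mul_norm hsum
    · rw [← E.tsum_eq]
      simp_rw [hE]
      rw [← tsum_mul_tsum_of_summable_norm (hf 0) hsum, htsum, Fin.prod_univ_succ]

theorem summable_norm_prod_and_tsum_prod {ι : Type*} [Fintype ι] (f : ι → κ → R)
    (hf : ∀ i, Summable fun k => ‖f i k‖) :
    Summable (fun m : ι → κ => ‖∏ i, f i (m i)‖) ∧
      ∑' m : ι → κ, ∏ i, f i (m i) = ∏ i, ∑' k, f i k := by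
  let e := (Fintype.equivFin ι).symm
  obtain ⟨hsum, htsum⟩ :=
    summable_norm_prod_and_tsum_prod_fin _ (fun j => f (e j)) fun j => hf (e j)
  let E := e.arrowCongr (Equiv.refl κ)
  have hE : ∀ m, ∏ i, f i (E m i) = ∏ j, f (e j) (m j) := fun m => by
    simp [E, ← e.prod_comp]
  refine ⟨?_, ?_⟩
  · rw [← E.summable_iff]
    simpa only [Function.comp_def, hE] using hsum
  · rw [← E.tsum_eq]
    simp_rw [hE]
    rw [htsum, e.prod_comp fun i => ∑' k, f i k]

end TsumPiProd

theorem summable_pow_sq_mul_pow {R S : ℝ} (hR₀ : 0 ≤ R) (hR₁ : R < 1) (hS : 0 ≤ S) :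
    Summable fun n : ℕ => R ^ (n ^ 2) * S ^ n := by
  have hsmall : ∀ᶠ n : ℕ in atTop, R ^ n * S ≤ 1 / 2 := by
    have := (tendsto_pow_atTop_nhds_zero_of_lt_one hR₀ hR₁).mul_const S
    rw [zero_mul] at this
    exact this.eventually_le_const (by norm_num)
  refine Summable.of_norm_bounded_eventually_nat summable_geometric_two ?_
  filter_upwards [hsmall] with n hn
  calc ‖R ^ (n ^ 2) * S ^ n‖ = (R ^ n * S) ^ n := by
        rw [Real.norm_of_nonneg (by positivity), mul_pow, ← pow_mul, sq]
    _ ≤ (1 / 2) ^ n := pow_le_pow_left₀ (by positivity) hn n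

theorem summable_zpow_sq_mul_zpow {R S : ℝ} (hR₀ : 0 ≤ R) (hR₁ : R < 1) (hS : 0 ≤ S) :
    Summable fun n : ℤ => R ^ (n ^ 2) * S ^ n := by
  refine Summable.of_nat_of_neg ?_ ?_
  · exact_mod_cast summable_pow_sq_mul_pow hR₀ hR₁ hS
  · simp only [neg_sq, zpow_neg, ← inv_zpow]
    exact_mod_cast summable_pow_sq_mul_pow hR₀ hR₁ (inv_nonneg.2 hS)

section ThetaSeries

variable {q w p u : ℂ}

noncomputable def thetaTerm (p u : ℂ) (a : ℤ) : ℂ := p ^ (a ^ 2) * u ^ a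

theorem summable_norm_thetaTerm (hp : ‖p‖ < 1) : Summable fun a => ‖thetaTerm p u a‖ := by
  simpa only [thetaTerm, norm_mul, norm_zpow] using
    summable_zpow_sq_mul_zpow (norm_nonneg p) hp (norm_nonneg u)

theorem theta0_eq_tsum_thetaTerm (hp : p ^ 2 = q) (hu : u ^ 2 = w) :
    theta0 q w = ∑' m : ℤ, thetaTerm p u (2 * m) := by
  refine tsum_congr fun m => ?_
  rw [thetaTerm, ← hp, ← hu, ← zpow_natCast, ← zpow_natCast, ← zpow_mul, ← zpow_mul]
  ring_nf

theorem theta1_eq_tsum_thetaTerm : theta1 p u = ∑' m : ℤ, thetaTerm p u (2 * m + 1) := by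
  refine tsum_congr fun m => ?_
  rw [thetaTerm]
  ring_nf

noncomputable def thetaSummand {ι : Type*} [Fintype ι] (q w : ℂ) (a : ι → ℤ) : ℂ :=
  q ^ ((∑ i, a i ^ 2) / 2) * w ^ ((∑ i, a i) / 2)

theorem ThetaL_eq_tsum_indicator {ι : Type*} [Fintype ι] (T : Set (ι → ℤ)) :
    ThetaL T q w = ∑' a, T.indicator (thetaSummand q w) a :=
  tsum_subtype T (thetaSummand q w)

theorem thetaSummand_eq_prod_thetaTerm {ι : Type*} [Fintype ι] (hp : p ^ 2 = q) (hu : u ^ 2 = w)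
    (hp₀ : p ≠ 0) (hu₀ : u ≠ 0) {a : ι → ℤ} (ha : Even (∑ i, a i)) :
    thetaSummand q w a = ∏ i, thetaTerm p u (a i) := by
  have hsq : Even (∑ i, a i ^ 2) := by
    have : ∑ i, a i ^ 2 = ∑ i, a i + ∑ i, a i * (a i - 1) := by
      rw [← sum_add_distrib]; exact sum_congr rfl fun i _ => by ring
    rw [this]
    exact ha.add (Finset.even_sum _ fun i _ => Int.even_mul_pred_self _)
  have half : ∀ {z : ℂ} {N : ℤ}, Even N → (z ^ 2) ^ (N / 2) = z ^ N := by
    rintro z N ⟨k, rfl⟩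
    rw [← zpow_natCast, ← zpow_mul]
    congr 1
    omega
  rw [thetaSummand, ← hp, ← hu, half hsq, half ha, zpow_sum₀ hp₀, zpow_sum₀ hu₀,
    ← prod_mul_distrib]
  rfl

end ThetaSeries

section Parity

variable {ι : Type*} {q w p u : ℂ}

def parityPattern (a : ι → ℤ) : ι → ZMod 2 := fun i => a i

theorem even_sum_of_parityPattern_eq [Fintype ι] {a : ι → ℤ} {ε : ι → ZMod 2}
    (ha : parityPattern a = ε) (hε : ∑ i, ε i = 0) : Even (∑ i, a i) := by
  rw [← ZMod.intCast_eq_zero_iff_even, Int.cast_sum, ← hε, ← ha]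
  rfl

theorem parityPattern_two_mul_add_val (m : ι → ℤ) (ε : ι → ZMod 2) :
    parityPattern (fun i => 2 * m i + (ε i).val) = ε := by
  funext i
  simp [parityPattern, show (2 : ZMod 2) = 0 from rfl]

theorem exists_two_mul_add_val_eq {a : ι → ℤ} {ε : ι → ZMod 2} (ha : parityPattern a = ε) :
    ∃ m : ι → ℤ, (fun i => 2 * m i + (ε i).val) = a := by
  have h : ∀ i, ∃ k, a i = 2 * k + (ε i).val := fun i => by
    have : Even (a i - (ε i).val) := by
      rw [← ZMod.intCast_eq_zero_iff_even, ← ha]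
      simp [parityPattern]
    obtain ⟨k, hk⟩ := this
    exact ⟨k, by omega⟩
  choose m hm using h
  exact ⟨m, funext fun i => (hm i).symm⟩

theorem hasSum_indicator_fiber_parityPattern [Fintype ι] (hp : p ^ 2 = q) (hu : u ^ 2 = w)
    (hp₀ : p ≠ 0) (hu₀ : u ≠ 0) (hp₁ : ‖p‖ < 1) (ε : ι → ZMod 2) (hε : ∑ i, ε i = 0) :
    HasSum ((parityPattern ⁻¹' {ε}).indicator (thetaSummand q w))
      (∏ i, ∑' m : ℤ, thetaTerm p u (2 * m + (ε i).val)) := by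
  set F := (parityPattern ⁻¹' {ε}).indicator (thetaSummand q w) with hF
  let g : (ι → ℤ) → ι → ℤ := fun m i => 2 * m i + (ε i).val
  have hg : Function.Injective g := fun m m' h => funext fun i => by
    have := congrFun h i
    simp only [g] at this
    omega
  have hrange : ∀ a ∉ Set.range g, F a = 0 := fun a ha =>
    Set.indicator_of_notMem (s := parityPattern ⁻¹' {ε})
      (fun h => ha (exists_two_mul_add_val_eq h)) _
  have hterm : ∀ m, F (g m) = ∏ i, thetaTerm p u (2 * m i + (ε i).val) := fun m => by
    have hm : parityPattern (g m) = ε := parityPattern_two_mul_add_val m ε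
    rw [hF, Set.indicator_of_mem (s := parityPattern ⁻¹' {ε}) hm,
      thetaSummand_eq_prod_thetaTerm hp hu hp₀ hu₀ (even_sum_of_parityPattern_eq hm hε)]
  obtain ⟨hsum, htsum⟩ := summable_norm_prod_and_tsum_prod
    (fun i m => thetaTerm p u (2 * m + (ε i).val))
    fun i => (summable_norm_thetaTerm hp₁).comp_injective fun m m' h => by simpa using h
  rw [← hg.hasSum_iff hrange, Function.comp_def, funext hterm, ← htsum]
  exact hsum.of_norm.hasSum

theorem prod_tsum_thetaTerm_parity [Fintype ι] (hp : p ^ 2 = q) (hu : u ^ 2 = w)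
    (ε : ι → ZMod 2) :
    ∏ i, ∑' m : ℤ, thetaTerm p u (2 * m + (ε i).val) =
      theta0 q w ^ #{i | ε i = 0} * theta1 p u ^ #{i | ε i = 1} := by
  rw [← Fintype.prod_fiberwise' ε fun c => ∑' m : ℤ, thetaTerm p u (2 * m + c.val)]
  simp only [prod_const, card_univ, Fintype.card_subtype]
  rw [show (univ : Finset (ZMod 2)) = {0, 1} from rfl, prod_pair (by decide), ZMod.val_zero,
    ZMod.val_one, theta0_eq_tsum_thetaTerm hp hu, theta1_eq_tsum_thetaTerm]
  simp

theorem ThetaL_preimage_parityPattern [Fintype ι] (hp : p ^ 2 = q) (hu : u ^ 2 = w)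
    (hp₀ : p ≠ 0) (hu₀ : u ≠ 0) (hp₁ : ‖p‖ < 1) (S : Finset (ι → ZMod 2))
    (hS : ∀ ε ∈ S, ∑ i, ε i = 0) :
    ThetaL (parityPattern ⁻¹' (S : Set (ι → ZMod 2))) q w =
      ∑ ε ∈ S, theta0 q w ^ #{i | ε i = 0} * theta1 p u ^ #{i | ε i = 1} := by
  have h := hasSum_sum fun ε hε =>
    hasSum_indicator_fiber_parityPattern hp hu hp₀ hu₀ hp₁ ε (hS ε hε)
  simp_rw [prod_tsum_thetaTerm_parity hp hu] at h
  rw [ThetaL_eq_tsum_indicator, ← h.tsum_eq]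
  congr 1
  funext a
  classical
  simp only [Set.indicator_apply, Set.mem_preimage, Set.mem_singleton_iff, Finset.mem_coe,
    Finset.sum_ite_eq]

end Parity

def kummerShPattern (t : (Fin 4 → ZMod 2) × ZMod 2 × Bool) (x : V4) : ZMod 2 :=
  ∑ i, x i * t.1 i + t.2.1 + ((cond t.2.2 shiftR1 shiftR0 x : ℤ) : ZMod 2)

theorem mem_KummerD_iff {a : V4 → ℤ} :
    a ∈ KummerD ↔
      ∃ (l : Fin 4 → ZMod 2) (c : ZMod 2), ∀ x, (a x : ZMod 2) = ∑ i, x i * l i + c := by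
  constructor
  · rintro ⟨l, c, h⟩
    refine ⟨fun i => l fun j => if i = j then 1 else 0, c, fun x => ?_⟩
    rw [h, LinearMap.pi_apply_eq_sum_univ l x]
    rfl
  · rintro ⟨l, c, h⟩
    exact ⟨Fintype.linearCombination (ZMod 2) l, c, fun x => by
      rw [h, Fintype.linearCombination_apply]
      rfl⟩

theorem KummerShD_eq_preimage :
    KummerShD = parityPattern ⁻¹' ↑(univ.image kummerShPattern) := by
  ext a
  simp only [KummerShD, Set.mem_ofPred_eq, mem_KummerD_iff, Set.mem_preimage, coe_image, coe_univ,
    Set.image_univ, Set.mem_range, Prod.exists, Bool.exists_bool, funext_iff, kummerShPattern,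
    parityPattern, Pi.sub_apply, Int.cast_sub, sub_eq_iff_eq_add, cond_false, cond_true,
    exists_or, eq_comm]

theorem kummerShPattern_injective : Function.Injective kummerShPattern := by decide

theorem sum_kummerShPattern_eq_zero (t : (Fin 4 → ZMod 2) × ZMod 2 × Bool) :
    ∑ x, kummerShPattern t x = 0 := by
  revert t
  decide

theorem map_card_kummerShPattern_eq :
    univ.val.map (fun t => (#{x | kummerShPattern t x = 0}, #{x | kummerShPattern t x = 1})) =
      Multiset.replicate 4 (4, 12) + Multiset.replicate 16 (6, 10) +
        Multiset.replicate 24 (8, 8) + Multiset.replicate 16 (10, 6) +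
          Multiset.replicate 4 (12, 4) := by
  decide

theorem sum_card_kummerShPattern {M : Type*} [AddCommMonoid M] (g : ℕ × ℕ → M) :
    ∑ t, g (#{x | kummerShPattern t x = 0}, #{x | kummerShPattern t x = 1}) =
      4 • g (4, 12) + 16 • g (6, 10) + 24 • g (8, 8) + 16 • g (10, 6) + 4 • g (12, 4) := by
  calc ∑ t, g (#{x | kummerShPattern t x = 0}, #{x | kummerShPattern t x = 1})
      = ((univ.val.map fun t => (#{x | kummerShPattern t x = 0},
          #{x | kummerShPattern t x = 1})).map g).sum := by rw [Multiset.map_map]; rfl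
    _ = _ := by
      rw [map_card_kummerShPattern_eq]
      simp only [Multiset.map_add, Multiset.map_replicate, Multiset.sum_add, Multiset.sum_replicate]

/-- `Θ_{K_sh}(q²,w) = 4θ₀⁴θ₁¹² + 16θ₀⁶θ₁¹⁰ + 24θ₀⁸θ₁⁸ + 16θ₀¹⁰θ₁⁶ + 4θ₀¹²θ₁⁴`. -/
theorem theta_Kummer_shifted (q w p u : ℂ)
    (hq0 : 0 < ‖q‖) (hq1 : ‖q‖ < 1) (hw : w ≠ 0)
    (hp : p ^ 2 = q) (hu : u ^ 2 = w) :
    ThetaL KummerShD q w =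
      4 * theta0 q w ^ 4 * theta1 p u ^ 12 + 16 * theta0 q w ^ 6 * theta1 p u ^ 10 +
        24 * theta0 q w ^ 8 * theta1 p u ^ 8 + 16 * theta0 q w ^ 10 * theta1 p u ^ 6 +
        4 * theta0 q w ^ 12 * theta1 p u ^ 4 := by
  have hp₀ : p ≠ 0 := by rintro rfl; simp [← hp] at hq0
  have hu₀ : u ≠ 0 := by rintro rfl; simp [← hu] at hw
  have hp₁ : ‖p‖ < 1 := by
    rw [← hp, norm_pow] at hq1
    exact (pow_lt_one_iff_of_nonneg (norm_nonneg p) two_ne_zero).1 hq1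
  rw [KummerShD_eq_preimage, ThetaL_preimage_parityPattern hp hu hp₀ hu₀ hp₁ _
      (forall_mem_image.2 fun t _ => sum_kummerShPattern_eq_zero t),
    sum_image fun _ _ _ _ h => kummerShPattern_injective h,
    sum_card_kummerShPattern fun k => theta0 q w ^ k.1 * theta1 p u ^ k.2]
  simp only [nsmul_eq_mul]
  push_cast
  ring
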